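/- Let G be a finite simple graph, let M be the output matching of a 1-2-MinGreedy execution on G, and let M* be a maximum matching of G in normal form with respect to M. Then: (a) every endpoint w of an M-augmenting path of (V, M ∪ M*) is the target of at most two uncanceled transfers, and if some transfer targeting w is canceled then w is the target of exactly two uncanceled transfers; (b) every endpoint of an M-augmenting path is the target of at least one uncanceled transfer, so every M-augmenting path is the target of at least two uncanceled transfers at its two endpoints. -/
import Mathlib


namespace MinGreedy

noncomputable section

open SimpleGraph

/-- The degree of a vertex `x` in the graph `H`. -/
def deg {V : Type} (H : SimpleGraph V) (x : V) : ℕ :=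
  (H.neighborSet x).ncard

/-- `M` is a matching of `G`, given as a set of pairwise disjoint edges of `G`. -/
def IsMatchingSet {V : Type} (G : SimpleGraph V) (M : Set (Sym2 V)) : Prop :=
  M ⊆ G.edgeSet ∧ ∀ e ∈ M, ∀ f ∈ M, e ≠ f → ∀ x : V, x ∈ e → x ∉ f

/-- `M` is a maximum matching of `G`. -/
def IsMaxMatchingSet {V : Type} (G : SimpleGraph V) (M : Set (Sym2 V)) : Prop :=
  IsMatchingSet G M ∧ ∀ N : Set (Sym2 V), IsMatchingSet G N → N.ncard ≤ M.ncard

/-- `ν G`, the maximum size of a matching of `G`. -/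
def nu {V : Type} (G : SimpleGraph V) : ℕ :=
  sSup {n | ∃ M : Set (Sym2 V), IsMatchingSet G M ∧ M.ncard = n}

/-- `G` has maximum degree at most `Δ`. -/
def maxDegLE {V : Type} (G : SimpleGraph V) (Δ : ℕ) : Prop :=
  ∀ x : V, deg G x ≤ Δ

/-- An execution of a greedy matching algorithm on `G`: in step `i` (`0 ≤ i < k`) the
edge `{sel i, oth i}` of `Gs i` is picked with selected vertex `sel i`, and `Gs (i+1)`
is obtained from `Gs i` by deleting all edges incident with `sel i` or `oth i`;
at the end `Gs k` has no edges. -/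
structure GreedyExec (V : Type) (G : SimpleGraph V) where
  k : ℕ
  Gs : ℕ → SimpleGraph V
  sel : ℕ → V
  oth : ℕ → V
  init : Gs 0 = G
  adj : ∀ i < k, (Gs i).Adj (sel i) (oth i)
  step : ∀ i < k, Gs (i + 1) =
    SimpleGraph.fromEdgeSet {e | e ∈ (Gs i).edgeSet ∧ sel i ∉ e ∧ oth i ∉ e}
  final : (Gs k).edgeSet = ∅

/-- The output matching `M = {e_1, …, e_k}` of an execution. -/
def GreedyExec.M {V : Type} {G : SimpleGraph V} (E : GreedyExec V G) : Set (Sym2 V) :=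
  {e | ∃ i < E.k, e = s(E.sel i, E.oth i)}

/-- The execution is a MinGreedy execution: in each step the selected vertex has
minimum positive degree in the current graph. -/
def GreedyExec.IsMinGreedy {V : Type} {G : SimpleGraph V} (E : GreedyExec V G) : Prop :=
  ∀ i < E.k, ∀ x : V, 0 < deg (E.Gs i) x → deg (E.Gs i) (E.sel i) ≤ deg (E.Gs i) x

/-- The execution is a 1-2-MinGreedy execution: whenever the current graph has a vertex of
degree 1 or 2, the selected vertex has minimum positive degree in the current graph. -/
def GreedyExec.Is12MinGreedy {V : Type} {G : SimpleGraph V} (E : GreedyExec V G) : Prop :=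
  ∀ i < E.k, (∃ x : V, deg (E.Gs i) x = 1 ∨ deg (E.Gs i) x = 2) →
    ∀ x : V, 0 < deg (E.Gs i) x → deg (E.Gs i) (E.sel i) ≤ deg (E.Gs i) x

/-- `p 0, p 1, …, p (2m+1)` is an `M`-augmenting path: an `M`-alternating path whose
first and last edges lie in `Mopt` and whose two endpoints `p 0` and `p (2m+1)` are
not covered by `M`; it has `m` edges of `M` and `m+1` edges of `Mopt`. -/
def IsAugPath {V : Type} (M Mopt : Set (Sym2 V)) (m : ℕ) (p : ℕ → V) : Prop :=
  (∀ i ≤ 2 * m + 1, ∀ j ≤ 2 * m + 1, p i = p j → i = j) ∧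
  (∀ j ≤ 2 * m, (j % 2 = 0 → s(p j, p (j + 1)) ∈ Mopt) ∧
                (j % 2 = 1 → s(p j, p (j + 1)) ∈ M)) ∧
  (∀ e ∈ M, p 0 ∉ e ∧ p (2 * m + 1) ∉ e)

/-- The vertex set of the path `p 0, …, p (2m+1)`. -/
def pathSupp {V : Type} (m : ℕ) (p : ℕ → V) : Set V := p '' {j | j ≤ 2 * m + 1}

/-- `w` is an endpoint of an `M`-augmenting path of the graph `(V, M ∪ Mopt)`. -/
def IsPathEndpoint {V : Type} (M Mopt : Set (Sym2 V)) (w : V) : Prop :=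
  ∃ m p, IsAugPath M Mopt m p ∧ (w = p 0 ∨ w = p (2 * m + 1))

/-- `S` is the vertex set of a singleton component: a single edge of `M ∩ Mopt`. -/
def IsSingletonComp {V : Type} (M Mopt : Set (Sym2 V)) (S : Set V) : Prop :=
  ∃ x y : V, x ≠ y ∧ s(x, y) ∈ M ∧ s(x, y) ∈ Mopt ∧ S = ({x, y} : Set V)

/-- `Mopt` is a maximum matching of `G` in normal form with respect to `M`: every
(nontrivial) connected component of the graph `(V, M ∪ Mopt)` is a singleton
(a single edge of `M ∩ Mopt`) or an `M`-augmenting path. -/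
def NormalForm {V : Type} (G : SimpleGraph V) (M Mopt : Set (Sym2 V)) : Prop :=
  IsMaxMatchingSet G Mopt ∧
  ∀ C : (SimpleGraph.fromEdgeSet (M ∪ Mopt)).ConnectedComponent,
    2 ≤ C.supp.ncard →
    IsSingletonComp M Mopt C.supp ∨
    ∃ m p, IsAugPath M Mopt m p ∧ C.supp = pathSupp m p

/-- `{x, y}` is an edge of `F = E ∖ (M ∪ Mopt)`. -/
def FEdge {V : Type} (G : SimpleGraph V) (M Mopt : Set (Sym2 V)) (x y : V) : Prop :=
  s(x, y) ∈ G.edgeSet ∧ s(x, y) ∉ M ∧ s(x, y) ∉ Mopt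

/-- The number of `F`-edges incident with `x`. -/
def Fdeg {V : Type} (G : SimpleGraph V) (M Mopt : Set (Sym2 V)) (x : V) : ℕ :=
  {e : Sym2 V | e ∈ G.edgeSet ∧ e ∉ M ∧ e ∉ Mopt ∧ x ∈ e}.ncard

/-- `x` is matched at step `i` of the execution, i.e. `x ∈ e_i`. -/
def matchedAt {V : Type} {G : SimpleGraph V} (E : GreedyExec V G) (i : ℕ) (x : V) : Prop :=
  i < E.k ∧ (x = E.sel i ∨ x = E.oth i)

/-- The `F`-edge `{v, w}` is a transfer from `v` to `w` arising at step `i`: `w` is an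
endpoint of an `M`-augmenting path, `v` is matched at step `i` and the degree of `w`
in the graph after step `i` is at most 1. -/
def transferAt {V : Type} {G : SimpleGraph V} (E : GreedyExec V G)
    (M Mopt : Set (Sym2 V)) (i : ℕ) (v w : V) : Prop :=
  FEdge G M Mopt v w ∧ IsPathEndpoint M Mopt w ∧ matchedAt E i v ∧
  deg (E.Gs (i + 1)) w ≤ 1

/-- The edge `{v, w}` is a transfer from `v` to `w`. -/
def IsTransfer {V : Type} {G : SimpleGraph V} (E : GreedyExec V G)
    (M Mopt : Set (Sym2 V)) (v w : V) : Prop :=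
  ∃ i, transferAt E M Mopt i v w

/-- `(v, w)` is an uncanceled transfer arising at step `i`: it is a transfer arising at
step `i` and it is not the case that (`w` has degree exactly 1 before step `i` with its
unique incident edge being `{v, w}`, and `w` is the target of at least two uncanceled
transfers arising at steps before `i`). -/
def uncanceledAt {V : Type} {G : SimpleGraph V} (E : GreedyExec V G)
    (M Mopt : Set (Sym2 V)) (i : ℕ) : V → V → Prop :=
  Nat.strongRecOn (motive := fun _ => V → V → Prop) i (fun i ih v w =>
    transferAt E M Mopt i v w ∧
    ¬(deg (E.Gs i) w = 1 ∧ (E.Gs i).Adj v w ∧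
      ∃ (j₁ : ℕ) (h₁ : j₁ < i) (v₁ : V) (j₂ : ℕ) (h₂ : j₂ < i) (v₂ : V),
        ih j₁ h₁ v₁ w ∧ ih j₂ h₂ v₂ w ∧ (j₁, v₁) ≠ (j₂, v₂)))

/-- `(v, w)` is an uncanceled transfer. -/
def IsUncanceledTransfer {V : Type} {G : SimpleGraph V} (E : GreedyExec V G)
    (M Mopt : Set (Sym2 V)) (v w : V) : Prop :=
  ∃ i, uncanceledAt E M Mopt i v w

/-- `(v, w)` is a canceled transfer. -/
def IsCanceledTransfer {V : Type} {G : SimpleGraph V} (E : GreedyExec V G)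
    (M Mopt : Set (Sym2 V)) (v w : V) : Prop :=
  IsTransfer E M Mopt v w ∧ ¬IsUncanceledTransfer E M Mopt v w

/-- `d_X`: the number of transfers whose source lies in the vertex set `X`. -/
def debits {V : Type} {G : SimpleGraph V} (E : GreedyExec V G)
    (M Mopt : Set (Sym2 V)) (X : Set V) : ℕ :=
  {q : V × V | IsTransfer E M Mopt q.1 q.2 ∧ q.1 ∈ X}.ncard

/-- `c_X`: the number of transfers whose target lies in the vertex set `X`. -/
def credits {V : Type} {G : SimpleGraph V} (E : GreedyExec V G)
    (M Mopt : Set (Sym2 V)) (X : Set V) : ℕ :=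
  {q : V × V | IsTransfer E M Mopt q.1 q.2 ∧ q.2 ∈ X}.ncard

/-- `i` is the creation step of the component with vertex set `X`: the step in which the
first edge of `M` lying in `X` is picked. -/
def creationStep {V : Type} {G : SimpleGraph V} (E : GreedyExec V G)
    (X : Set V) (i : ℕ) : Prop :=
  i < E.k ∧ E.sel i ∈ X ∧ E.oth i ∈ X ∧ ∀ j < i, ¬(E.sel j ∈ X ∧ E.oth j ∈ X)

/-- A degree-1 endpoint exists after the creation step `i`: some transfer with source
`sel i` or `oth i` targets an endpoint `w` of degree exactly 1 after step `i`. -/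
def Deg1EndpointAfter {V : Type} {G : SimpleGraph V} (E : GreedyExec V G)
    (M Mopt : Set (Sym2 V)) (i : ℕ) : Prop :=
  ∃ v w : V, (v = E.sel i ∨ v = E.oth i) ∧ transferAt E M Mopt i v w ∧
    deg (E.Gs (i + 1)) w = 1

section Aux

variable {V : Type} {G : SimpleGraph V}

lemma uncanceledAt_eq (E : GreedyExec V G) (M Mopt : Set (Sym2 V)) (i : ℕ) :
    uncanceledAt E M Mopt i = fun v w =>
      transferAt E M Mopt i v w ∧
      ¬(deg (E.Gs i) w = 1 ∧ (E.Gs i).Adj v w ∧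
        ∃ (j₁ : ℕ) (_ : j₁ < i) (v₁ : V) (j₂ : ℕ) (_ : j₂ < i) (v₂ : V),
          uncanceledAt E M Mopt j₁ v₁ w ∧ uncanceledAt E M Mopt j₂ v₂ w ∧
          (j₁, v₁) ≠ (j₂, v₂)) := by
  rw [uncanceledAt, Nat.strongRecOn, WellFounded.fix_eq]
  rfl

lemma uncanceledAt_iff (E : GreedyExec V G) (M Mopt : Set (Sym2 V)) (i : ℕ) (v w : V) :
    uncanceledAt E M Mopt i v w ↔
      transferAt E M Mopt i v w ∧
      ¬(deg (E.Gs i) w = 1 ∧ (E.Gs i).Adj v w ∧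
        ∃ (j₁ : ℕ) (_ : j₁ < i) (v₁ : V) (j₂ : ℕ) (_ : j₂ < i) (v₂ : V),
          uncanceledAt E M Mopt j₁ v₁ w ∧ uncanceledAt E M Mopt j₂ v₂ w ∧
          (j₁, v₁) ≠ (j₂, v₂)) := by
  rw [uncanceledAt_eq]

namespace GreedyExec

variable (E : GreedyExec V G)

lemma edgeSet_succ_subset {i : ℕ} (hi : i < E.k) :
    (E.Gs (i + 1)).edgeSet ⊆ (E.Gs i).edgeSet := by
  rw [E.step i hi, SimpleGraph.edgeSet_fromEdgeSet]
  intro e he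
  exact he.1.1

lemma edgeSet_mono {i j : ℕ} (hij : i ≤ j) (hj : j ≤ E.k) :
    (E.Gs j).edgeSet ⊆ (E.Gs i).edgeSet := by
  induction j with
  | zero => obtain rfl : i = 0 := Nat.le_zero.mp hij; exact subset_rfl
  | succ n ih =>
    rcases Nat.eq_or_lt_of_le hij with rfl | h
    · exact subset_rfl
    · exact (E.edgeSet_succ_subset (by omega)).trans (ih (by omega) (by omega))

lemma edgeSet_subset_G {i : ℕ} (hi : i ≤ E.k) : (E.Gs i).edgeSet ⊆ G.edgeSet := by
  have := E.edgeSet_mono (Nat.zero_le i) hi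
  rwa [E.init] at this

lemma mem_M {i : ℕ} (hi : i < E.k) : s(E.sel i, E.oth i) ∈ E.M := ⟨i, hi, rfl⟩

lemma not_matched_mem_edge {i j : ℕ} {x : V} (h : matchedAt E i x) (hij : i < j)
    (hj : j ≤ E.k) {e : Sym2 V} (he : e ∈ (E.Gs j).edgeSet) : x ∉ e := by
  have h1 : e ∈ (E.Gs (i + 1)).edgeSet := E.edgeSet_mono (by omega) hj he
  rw [E.step i h.1, SimpleGraph.edgeSet_fromEdgeSet] at h1
  rcases h.2 with rfl | rfl
  · exact h1.1.2.1
  · exact h1.1.2.2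

lemma matchedAt_lt_false {i j : ℕ} {x : V} (hi : matchedAt E i x) (hj : matchedAt E j x)
    (hij : i < j) : False :=
  E.not_matched_mem_edge hi hij hj.1.le (((E.Gs j).mem_edgeSet).mpr (E.adj j hj.1))
    (Sym2.mem_iff.mpr hj.2)

lemma matchedAt_unique {i j : ℕ} {x : V} (hi : matchedAt E i x) (hj : matchedAt E j x) :
    i = j := by
  rcases Nat.lt_trichotomy i j with h | h | h
  · exact absurd (E.matchedAt_lt_false hi hj h) id
  · exact h
  · exact absurd (E.matchedAt_lt_false hj hi h) id

lemma survive {e : Sym2 V} {a b : ℕ} (hab : a ≤ b) (hb : b ≤ E.k)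
    (he : e ∈ (E.Gs a).edgeSet)
    (h : ∀ l, a ≤ l → l < b → E.sel l ∉ e ∧ E.oth l ∉ e) :
    e ∈ (E.Gs b).edgeSet := by
  induction b with
  | zero => obtain rfl : a = 0 := Nat.le_zero.mp hab; exact he
  | succ n ih =>
    rcases Nat.eq_or_lt_of_le hab with rfl | h2
    · exact he
    · have hn : e ∈ (E.Gs n).edgeSet :=
        ih (by omega) (by omega) (fun l h1 h2 => h l h1 (by omega))
      rw [E.step n (by omega), SimpleGraph.edgeSet_fromEdgeSet]
      refine ⟨⟨hn, (h n (by omega) (by omega)).1, (h n (by omega) (by omega)).2⟩, ?_⟩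
      simpa using (E.Gs n).not_isDiag_of_mem_edgeSet hn

lemma dies {e : Sym2 V} {a b : ℕ} (hab : a ≤ b) (hb : b ≤ E.k)
    (he : e ∈ (E.Gs a).edgeSet) (hne : e ∉ (E.Gs b).edgeSet) :
    ∃ l, a ≤ l ∧ l < b ∧ (E.sel l ∈ e ∨ E.oth l ∈ e) := by
  by_contra h
  push_neg at h
  refine hne (E.survive hab hb he (fun l h1 h2 => ?_))
  have := h l h1 h2
  tauto

lemma dies_G {x y : V} (he : s(x, y) ∈ G.edgeSet) :
    ∃ l, matchedAt E l x ∨ matchedAt E l y := by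
  have h0 : s(x, y) ∈ (E.Gs 0).edgeSet := by rw [E.init]; exact he
  have hk : s(x, y) ∉ (E.Gs E.k).edgeSet := by rw [E.final]; exact Set.notMem_empty _
  obtain ⟨l, -, hlk, h3⟩ := E.dies (Nat.zero_le _) le_rfl h0 hk
  refine ⟨l, ?_⟩
  rcases h3 with h | h <;> rw [Sym2.mem_iff] at h <;> rcases h with h | h
  · exact Or.inl ⟨hlk, Or.inl h.symm⟩
  · exact Or.inr ⟨hlk, Or.inl h.symm⟩
  · exact Or.inl ⟨hlk, Or.inr h.symm⟩
  · exact Or.inr ⟨hlk, Or.inr h.symm⟩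

lemma M_subset : E.M ⊆ G.edgeSet := by
  rintro e ⟨i, hi, rfl⟩
  exact E.edgeSet_subset_G hi.le (((E.Gs i).mem_edgeSet).mpr (E.adj i hi))

lemma M_edge_unique {e f : Sym2 V} (he : e ∈ E.M) (hf : f ∈ E.M) {x : V}
    (hxe : x ∈ e) (hxf : x ∈ f) : e = f := by
  obtain ⟨i, hi, rfl⟩ := he
  obtain ⟨j, hj, rfl⟩ := hf
  have : i = j :=
    E.matchedAt_unique ⟨hi, Sym2.mem_iff.mp hxe⟩ ⟨hj, Sym2.mem_iff.mp hxf⟩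
  rw [this]

end GreedyExec

section Deg

variable [Fintype V]

lemma one_le_deg {H : SimpleGraph V} {x y : V} (h : H.Adj x y) : 1 ≤ deg H x :=
  Set.ncard_pos (Set.toFinite _) |>.mpr ⟨y, h⟩

lemma deg_one_nbr {H : SimpleGraph V} {x y : V} (h1 : deg H x = 1) (h2 : H.Adj x y) :
    H.neighborSet x = {y} := by
  obtain ⟨a, ha⟩ := Set.ncard_eq_one.mp h1
  have hy : y ∈ H.neighborSet x := h2
  rw [ha] at hy ⊢
  rw [Set.mem_singleton_iff] at hy
  rw [hy]

lemma deg_le_one_of_nbr_subset {H : SimpleGraph V} {x y : V}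
    (h : H.neighborSet x ⊆ {y}) : deg H x ≤ 1 := by
  calc deg H x ≤ ({y} : Set V).ncard := Set.ncard_le_ncard h (Set.finite_singleton y)
  _ = 1 := Set.ncard_singleton y

lemma GreedyExec.deg_mono (E : GreedyExec V G) {x : V} {i j : ℕ} (hij : i ≤ j)
    (hj : j ≤ E.k) : deg (E.Gs j) x ≤ deg (E.Gs i) x := by
  apply Set.ncard_le_ncard _ (Set.toFinite _)
  intro y hy
  rw [SimpleGraph.mem_neighborSet] at hy ⊢
  rw [← SimpleGraph.mem_edgeSet] at hy ⊢
  exact E.edgeSet_mono hij hj hy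

end Deg

end Aux

section Aux2

variable {V : Type} {G : SimpleGraph V}

lemma matching_unique {M : Set (Sym2 V)}
    (hM : ∀ e ∈ M, ∀ f ∈ M, e ≠ f → ∀ x : V, x ∈ e → x ∉ f)
    {e f : Sym2 V} (he : e ∈ M) (hf : f ∈ M) {x : V}
    (hxe : x ∈ e) (hxf : x ∈ f) : e = f := by
  by_contra hne
  exact hM e he f hf hne x hxe hxf

lemma GreedyExec.matched_of_mem_edge (E : GreedyExec V G) {l : ℕ} (hl : l < E.k) {x y : V}
    (h : E.sel l ∈ s(x, y) ∨ E.oth l ∈ s(x, y)) :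
    matchedAt E l x ∨ matchedAt E l y := by
  rcases h with h | h <;> rw [Sym2.mem_iff] at h <;> rcases h with h | h
  · exact Or.inl ⟨hl, Or.inl h.symm⟩
  · exact Or.inr ⟨hl, Or.inl h.symm⟩
  · exact Or.inl ⟨hl, Or.inr h.symm⟩
  · exact Or.inr ⟨hl, Or.inr h.symm⟩

lemma no_fedge_contra [Fintype V] (E : GreedyExec V G) (h12 : E.Is12MinGreedy)
    {Mopt : Set (Sym2 V)} (hMopt : IsMatchingSet G Mopt) {m : ℕ} {p : ℕ → V}
    (hp : IsAugPath E.M Mopt m p)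
    (hnoF : ∀ v, ¬ FEdge G E.M Mopt v (p 0)) : False := by
  obtain ⟨hinj, hedges, hends⟩ := hp
  have hw_unmatched : ∀ l, ¬ matchedAt E l (p 0) :=
    fun l hl => (hends _ (E.mem_M hl.1)).1 (Sym2.mem_iff.mpr hl.2)
  have hz_unmatched : ∀ l, ¬ matchedAt E l (p (2*m+1)) :=
    fun l hl => (hends _ (E.mem_M hl.1)).2 (Sym2.mem_iff.mpr hl.2)
  have hMopt01 : s(p 0, p 1) ∈ Mopt := by
    have h := (hedges 0 (by omega)).1 (by omega)
    norm_num at h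
    exact h
  have nbrG : ∀ {i : ℕ}, i ≤ E.k → ∀ {u : V}, (E.Gs i).Adj (p 0) u → u = p 1 := by
    intro i hi u hu
    have huG : s(p 0, u) ∈ G.edgeSet := E.edgeSet_subset_G hi (((E.Gs i).mem_edgeSet).mpr hu)
    by_cases hM : s(p 0, u) ∈ E.M
    · exact ((hends _ hM).1 (Sym2.mem_mk_left _ _)).elim
    by_cases hMo : s(p 0, u) ∈ Mopt
    · have he := matching_unique hMopt.2 hMo hMopt01 (Sym2.mem_mk_left _ _) (Sym2.mem_mk_left _ _)
      exact Sym2.congr_right.mp he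
    · refine absurd ?_ (hnoF u)
      refine ⟨?_, ?_, ?_⟩ <;> rw [Sym2.eq_swap] <;> assumption
  have m1 : 1 ≤ m := by
    by_contra hm
    have hm0 : m = 0 := by omega
    subst hm0
    obtain ⟨l, hl⟩ := E.dies_G (hMopt.1 hMopt01)
    rcases hl with h | h
    · exact hw_unmatched l h
    · exact hz_unmatched l (by simpa using h)
  have main : ∀ i : ℕ, ∀ t : ℕ, 1 ≤ t → t ≤ m → i < E.k →
      s(E.sel i, E.oth i) = s(p (2*t-1), p (2*t)) → (E.Gs i).Adj (p 0) (p 1) → False := by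
    intro i
    induction i using Nat.strong_induction_on with
    | _ i IH =>
    intro t ht1 htm hik heq hadj01
    have hnbr0 : (E.Gs i).neighborSet (p 0) = {p 1} :=
      Set.eq_singleton_iff_unique_mem.mpr ⟨hadj01, fun u hu => nbrG hik.le hu⟩
    have hdeg0 : deg (E.Gs i) (p 0) = 1 := by rw [deg, hnbr0, Set.ncard_singleton]
    have hsel_le : deg (E.Gs i) (E.sel i) ≤ 1 := by
      have h := h12 i hik ⟨p 0, Or.inl hdeg0⟩ (p 0) (by omega)
      omega
    have hadj_i := E.adj i hik
    have hsel1 : deg (E.Gs i) (E.sel i) = 1 := le_antisymm hsel_le (one_le_deg hadj_i)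
    rcases Sym2.eq_iff.mp heq with ⟨hs, ho⟩ | ⟨hs, ho⟩
    · -- sel i = p (2t-1), oth i = p (2t)
      have hnbrs : (E.Gs i).neighborSet (p (2*t-1)) = {p (2*t)} := by
        apply deg_one_nbr
        · rw [← hs]; exact hsel1
        · rw [← hs, ← ho]; exact hadj_i
      have hMoptE : s(p (2*t-2), p (2*t-1)) ∈ Mopt := by
        have h := (hedges (2*t-2) (by omega)).1 (by omega)
        have e1 : 2*t-2+1 = 2*t-1 := by omega
        rwa [e1] at h
      have hne : p (2*t-2) ≠ p (2*t) := by
        intro hcon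
        have := hinj (2*t-2) (by omega) (2*t) (by omega) hcon
        omega
      have hdead : s(p (2*t-2), p (2*t-1)) ∉ (E.Gs i).edgeSet := by
        intro hmem
        have h1 : (E.Gs i).Adj (p (2*t-1)) (p (2*t-2)) :=
          ((E.Gs i).mem_edgeSet).mp (by rwa [Sym2.eq_swap] at hmem)
        have h2 : p (2*t-2) ∈ (E.Gs i).neighborSet (p (2*t-1)) := h1
        rw [hnbrs] at h2
        exact hne h2
      obtain ⟨l, -, hli, hl⟩ :=
        E.dies (Nat.zero_le i) hik.le (by rw [E.init]; exact hMopt.1 hMoptE) hdead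
      have hml := E.matched_of_mem_edge (hli.trans hik) hl
      rcases hml with h | h
      · rcases Nat.eq_or_lt_of_le ht1 with ht1' | ht2
        · apply hw_unmatched l
          have e0 : 2*t-2 = 0 := by omega
          rwa [e0] at h
        · have hMprev : s(p (2*t-3), p (2*t-2)) ∈ E.M := by
            have h' := (hedges (2*t-3) (by omega)).2 (by omega)
            have e1 : 2*t-3+1 = 2*t-2 := by omega
            rwa [e1] at h'
          have hel : s(E.sel l, E.oth l) = s(p (2*t-3), p (2*t-2)) :=
            E.M_edge_unique (E.mem_M h.1) hMprev (Sym2.mem_iff.mpr h.2)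
              (Sym2.mem_mk_right _ _)
          have e2 : 2*(t-1)-1 = 2*t-3 := by omega
          have e3 : 2*(t-1) = 2*t-2 := by omega
          exact IH l hli (t-1) (by omega) (by omega) h.1 (by rw [e2, e3]; exact hel)
            (((E.Gs l).mem_edgeSet).mp
              (E.edgeSet_mono hli.le hik.le (((E.Gs i).mem_edgeSet).mpr hadj01)))
      · have h' : matchedAt E i (p (2*t-1)) := ⟨hik, Or.inl hs.symm⟩
        exact absurd (E.matchedAt_unique h h') (by omega)
    · -- sel i = p (2t), oth i = p (2t-1)
      have hnbrs : (E.Gs i).neighborSet (p (2*t)) = {p (2*t-1)} := by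
        apply deg_one_nbr
        · rw [← hs]; exact hsel1
        · rw [← hs, ← ho]; exact hadj_i
      have hMoptE : s(p (2*t), p (2*t+1)) ∈ Mopt :=
        (hedges (2*t) (by omega)).1 (by omega)
      have hne : p (2*t+1) ≠ p (2*t-1) := by
        intro hcon
        have := hinj (2*t+1) (by omega) (2*t-1) (by omega) hcon
        omega
      have hdead : s(p (2*t), p (2*t+1)) ∉ (E.Gs i).edgeSet := by
        intro hmem
        have h1 : (E.Gs i).Adj (p (2*t)) (p (2*t+1)) := ((E.Gs i).mem_edgeSet).mp hmem
        have h2 : p (2*t+1) ∈ (E.Gs i).neighborSet (p (2*t)) := h1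
        rw [hnbrs] at h2
        exact hne h2
      obtain ⟨l, -, hli, hl⟩ :=
        E.dies (Nat.zero_le i) hik.le (by rw [E.init]; exact hMopt.1 hMoptE) hdead
      have hml := E.matched_of_mem_edge (hli.trans hik) hl
      rcases hml with h | h
      · have h' : matchedAt E i (p (2*t)) := ⟨hik, Or.inl hs.symm⟩
        exact absurd (E.matchedAt_unique h h') (by omega)
      · rcases Nat.eq_or_lt_of_le htm with ht1' | ht2
        · apply hz_unmatched l
          have e0 : 2*t+1 = 2*m+1 := by omega
          rwa [e0] at h
        · have hMnext : s(p (2*t+1), p (2*t+2)) ∈ E.M := by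
            have h' := (hedges (2*t+1) (by omega)).2 (by omega)
            have e1 : 2*t+1+1 = 2*t+2 := by omega
            rwa [e1] at h'
          have hel : s(E.sel l, E.oth l) = s(p (2*t+1), p (2*t+2)) :=
            E.M_edge_unique (E.mem_M h.1) hMnext (Sym2.mem_iff.mpr h.2)
              (Sym2.mem_mk_left _ _)
          have e2 : 2*(t+1)-1 = 2*t+1 := by omega
          have e3 : 2*(t+1) = 2*t+2 := by omega
          exact IH l hli (t+1) (by omega) (by omega) h.1 (by rw [e2, e3]; exact hel)
            (((E.Gs l).mem_edgeSet).mp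
              (E.edgeSet_mono hli.le hik.le (((E.Gs i).mem_edgeSet).mpr hadj01)))
  have hM12 : s(p 1, p 2) ∈ E.M := by
    have h := (hedges 1 (by omega)).2 (by omega)
    norm_num at h
    exact h
  obtain ⟨i1, hi1, heq1⟩ := hM12
  have hadj : (E.Gs i1).Adj (p 0) (p 1) := by
    apply ((E.Gs i1).mem_edgeSet).mp
    apply E.survive (Nat.zero_le i1) hi1.le (by rw [E.init]; exact hMopt.1 hMopt01)
    intro l hl0 hl1
    have hmat : matchedAt E i1 (p 1) :=
      ⟨hi1, Sym2.mem_iff.mp (heq1 ▸ Sym2.mem_mk_left (p 1) (p 2))⟩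
    constructor <;> intro hmem
    · rcases E.matched_of_mem_edge (hl1.trans hi1) (Or.inl (by exact hmem)) with h | h
      · exact hw_unmatched l h
      · exact absurd (E.matchedAt_unique h hmat) (by omega)
    · rcases E.matched_of_mem_edge (hl1.trans hi1) (Or.inr (by exact hmem)) with h | h
      · exact hw_unmatched l h
      · exact absurd (E.matchedAt_unique h hmat) (by omega)
  refine main i1 1 le_rfl m1 hi1 ?_ hadj
  have e1 : 2*1-1 = 1 := by norm_num
  have e2 : 2*1 = 2 := by norm_num
  rw [e1, e2]
  exact heq1.symm

end Aux2

section Aux3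

variable {V : Type} {G : SimpleGraph V}

lemma exists_transfer_p0 [Fintype V] (E : GreedyExec V G) (h12 : E.Is12MinGreedy)
    {Mopt : Set (Sym2 V)} (hMopt : IsMatchingSet G Mopt) {m : ℕ} {p : ℕ → V}
    (hp : IsAugPath E.M Mopt m p) :
    ∃ i v, transferAt E E.M Mopt i v (p 0) := by
  classical
  have hends := hp.2.2
  have hw_unmatched : ∀ l, ¬ matchedAt E l (p 0) :=
    fun l hl => (hends _ (E.mem_M hl.1)).1 (Sym2.mem_iff.mpr hl.2)
  have hMopt01 : s(p 0, p 1) ∈ Mopt := by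
    have h := (hp.2.1 0 (by omega)).1 (by omega)
    norm_num at h
    exact h
  have hPE : IsPathEndpoint E.M Mopt (p 0) := ⟨m, p, hp, Or.inl rfl⟩
  by_cases hF : ∃ v, FEdge G E.M Mopt v (p 0)
  · set P : ℕ → Prop := fun l => ∃ v, FEdge G E.M Mopt v (p 0) ∧ matchedAt E l v with hPdef
    obtain ⟨v0, hv0⟩ := hF
    obtain ⟨l0, hl0⟩ := E.dies_G (hv0.1)
    have hl0v : matchedAt E l0 v0 := by
      rcases hl0 with h | h
      · exact h
      · exact absurd h (hw_unmatched l0)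
    have hP0 : P l0 := ⟨v0, hv0, hl0v⟩
    have hPi : P (Nat.findGreatest P E.k) := Nat.findGreatest_spec hl0v.1.le hP0
    obtain ⟨v, hvF, hvm⟩ := hPi
    refine ⟨Nat.findGreatest P E.k, v, hvF, hPE, hvm, ?_⟩
    set i := Nat.findGreatest P E.k with hidef
    apply deg_le_one_of_nbr_subset (y := p 1)
    intro u hu
    rw [SimpleGraph.mem_neighborSet] at hu
    have huk : i + 1 ≤ E.k := hvm.1
    have huE : s(p 0, u) ∈ (E.Gs (i+1)).edgeSet := ((E.Gs (i+1)).mem_edgeSet).mpr hu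
    have huG : s(p 0, u) ∈ G.edgeSet := E.edgeSet_subset_G huk huE
    rw [Set.mem_singleton_iff]
    by_cases hM : s(p 0, u) ∈ E.M
    · exact ((hends _ hM).1 (Sym2.mem_mk_left _ _)).elim
    by_cases hMo : s(p 0, u) ∈ Mopt
    · exact Sym2.congr_right.mp
        (matching_unique hMopt.2 hMo hMopt01 (Sym2.mem_mk_left _ _) (Sym2.mem_mk_left _ _))
    · exfalso
      have hFu : FEdge G E.M Mopt u (p 0) := by
        refine ⟨?_, ?_, ?_⟩ <;> rw [Sym2.eq_swap] <;> assumption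
      obtain ⟨l, hl⟩ := E.dies_G hFu.1
      have hlu : matchedAt E l u := by
        rcases hl with h | h
        · exact h
        · exact absurd h (hw_unmatched l)
      rcases Nat.lt_or_ge i l with hgt | hle
      · exact Nat.findGreatest_is_greatest hgt hlu.1.le ⟨u, hFu, hlu⟩
      · exact E.not_matched_mem_edge hlu (by omega) huk
          (by rw [Sym2.eq_swap]; exact huE) (Sym2.mem_mk_left _ _)
  · push_neg at hF
    exact absurd (no_fedge_contra E h12 hMopt hp (fun v hv => (hF v) hv)) id

lemma augPath_reverse {M Mopt : Set (Sym2 V)} {m : ℕ} {p : ℕ → V}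
    (hp : IsAugPath M Mopt m p) : IsAugPath M Mopt m (fun j => p (2*m+1-j)) := by
  obtain ⟨hinj, hedges, hends⟩ := hp
  refine ⟨?_, ?_, ?_⟩
  · intro i hi j hj hij
    simp only at hij
    have := hinj (2*m+1-i) (by omega) (2*m+1-j) (by omega) hij
    omega
  · intro j hj
    have h1 : 2*m+1-j = (2*m-j)+1 := by omega
    have h2 : 2*m+1-(j+1) = 2*m-j := by omega
    constructor
    · intro hpar
      simp only [h1, h2]
      rw [Sym2.eq_swap]
      exact (hedges (2*m-j) (by omega)).1 (by omega)
    · intro hpar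
      simp only [h1, h2]
      rw [Sym2.eq_swap]
      exact (hedges (2*m-j) (by omega)).2 (by omega)
  · intro e he
    constructor
    · simpa using (hends e he).2
    · have h3 : 2*m+1-(2*m+1) = 0 := by omega
      simp only [h3]
      exact (hends e he).1

lemma endpoint_exists_transfer [Fintype V] (E : GreedyExec V G) (h12 : E.Is12MinGreedy)
    {Mopt : Set (Sym2 V)} (hMopt : IsMatchingSet G Mopt) {w : V}
    (hw : IsPathEndpoint E.M Mopt w) :
    ∃ i v, transferAt E E.M Mopt i v w := by
  obtain ⟨m, p, hp, hcase⟩ := hw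
  rcases hcase with rfl | rfl
  · exact exists_transfer_p0 E h12 hMopt hp
  · have hrev := augPath_reverse hp
    have h := exists_transfer_p0 E h12 hMopt hrev
    simpa using h

end Aux3

section Aux4

variable {V : Type} {G : SimpleGraph V}

lemma endpoint_unmatched (E : GreedyExec V G) {Mopt : Set (Sym2 V)} {w : V}
    (hw : IsPathEndpoint E.M Mopt w) : ∀ l, ¬ matchedAt E l w := by
  obtain ⟨m, p, hp, hcase⟩ := hw
  intro l hl
  have hmem : w ∈ s(E.sel l, E.oth l) := Sym2.mem_iff.mpr hl.2
  have h := hp.2.2 _ (E.mem_M hl.1)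
  rcases hcase with rfl | rfl
  · exact h.1 hmem
  · exact h.2 hmem

lemma transfer_step_unique (E : GreedyExec V G) {Mopt : Set (Sym2 V)} {i j : ℕ} {v w : V}
    (hi : transferAt E E.M Mopt i v w) (hj : transferAt E E.M Mopt j v w) : i = j :=
  E.matchedAt_unique hi.2.2.1 hj.2.2.1

lemma transfer_adj (E : GreedyExec V G) {Mopt : Set (Sym2 V)} {i : ℕ} {v w : V}
    (h : transferAt E E.M Mopt i v w) : (E.Gs i).Adj v w := by
  have hwn := endpoint_unmatched E h.2.1
  apply ((E.Gs i).mem_edgeSet).mp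
  apply E.survive (Nat.zero_le i) h.2.2.1.1.le (by rw [E.init]; exact h.1.1)
  intro l hl0 hli
  constructor <;> intro hmem
  · rcases E.matched_of_mem_edge (hli.trans h.2.2.1.1) (Or.inl hmem) with hh | hh
    · exact absurd (E.matchedAt_unique hh h.2.2.1) (by omega)
    · exact hwn l hh
  · rcases E.matched_of_mem_edge (hli.trans h.2.2.1.1) (Or.inr hmem) with hh | hh
    · exact absurd (E.matchedAt_unique hh h.2.2.1) (by omega)
    · exact hwn l hh

variable [Fintype V]

lemma transfer_nbr_singleton (E : GreedyExec V G) {Mopt : Set (Sym2 V)} {i j : ℕ}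
    {v v' w : V} (hi : transferAt E E.M Mopt i v w) (hj : transferAt E E.M Mopt j v' w)
    (hij : i < j) : (E.Gs j).neighborSet w = {v'} := by
  have hd : deg (E.Gs j) w ≤ 1 :=
    le_trans (E.deg_mono (by omega) hj.2.2.1.1.le) hi.2.2.2
  have hadj : (E.Gs j).Adj w v' := (transfer_adj E hj).symm
  exact deg_one_nbr (le_antisymm hd (one_le_deg hadj)) hadj

lemma two_high (E : GreedyExec V G) {Mopt : Set (Sym2 V)} {a b : ℕ} {u1 u2 u3 w : V}
    (h1 : transferAt E E.M Mopt a u1 w) (h2 : transferAt E E.M Mopt b u2 w)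
    (h3 : transferAt E E.M Mopt b u3 w) (d23 : u2 ≠ u3) (hab : a < b) : False := by
  have s2 := transfer_nbr_singleton E h1 h2 hab
  have s3 := transfer_nbr_singleton E h1 h3 hab
  rw [s2] at s3
  exact d23 (Set.singleton_eq_singleton_iff.mp s3)

lemma three_incr (E : GreedyExec V G) {Mopt : Set (Sym2 V)} {a b c : ℕ} {u1 u2 u3 w : V}
    (h1 : transferAt E E.M Mopt a u1 w) (h2 : transferAt E E.M Mopt b u2 w)
    (h3 : transferAt E E.M Mopt c u3 w) (hab : a < b) (hbc : b < c) : False := by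
  have hnb := transfer_nbr_singleton E h1 h2 hab
  have hadj3 : (E.Gs c).Adj u3 w := transfer_adj E h3
  have hmem : s(u3, w) ∈ (E.Gs b).edgeSet :=
    E.edgeSet_mono hbc.le h3.2.2.1.1.le (((E.Gs c).mem_edgeSet).mpr hadj3)
  have h32 : u3 ∈ (E.Gs b).neighborSet w := (((E.Gs b).mem_edgeSet).mp hmem).symm
  rw [hnb, Set.mem_singleton_iff] at h32
  subst h32
  exact absurd (transfer_step_unique E h2 h3) (by omega)

lemma same3 (E : GreedyExec V G) {a : ℕ} {u1 u2 u3 : V} (h1 : matchedAt E a u1)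
    (h2 : matchedAt E a u2) (h3 : matchedAt E a u3)
    (d12 : u1 ≠ u2) (d13 : u1 ≠ u3) (d23 : u2 ≠ u3) : False := by
  rcases h1.2 with e1 | e1 <;> rcases h2.2 with e2 | e2 <;> rcases h3.2 with e3 | e3 <;>
    first
      | exact d12 (e1.trans e2.symm)
      | exact d13 (e1.trans e3.symm)
      | exact d23 (e2.trans e3.symm)

lemma cancel_lemma (E : GreedyExec V G) {Mopt : Set (Sym2 V)} {a b : ℕ} {u1 u2 u3 w : V}
    (h1 : uncanceledAt E E.M Mopt a u1 w) (h2 : uncanceledAt E E.M Mopt a u2 w)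
    (d12 : u1 ≠ u2) (h3 : uncanceledAt E E.M Mopt b u3 w) (hab : a < b) : False := by
  have t1 := ((uncanceledAt_iff E E.M Mopt a u1 w).mp h1).1
  have t3' := (uncanceledAt_iff E E.M Mopt b u3 w).mp h3
  have t3 := t3'.1
  have hnb := transfer_nbr_singleton E t1 t3 hab
  have hdeg : deg (E.Gs b) w = 1 := by rw [deg, hnb, Set.ncard_singleton]
  have hadj : (E.Gs b).Adj u3 w := transfer_adj E t3
  apply t3'.2
  refine ⟨hdeg, hadj, a, hab, u1, a, hab, u2, h1, h2, ?_⟩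
  simp [d12]

lemma not_three (E : GreedyExec V G) {Mopt : Set (Sym2 V)} {i1 i2 i3 : ℕ} {u1 u2 u3 w : V}
    (h1 : uncanceledAt E E.M Mopt i1 u1 w) (h2 : uncanceledAt E E.M Mopt i2 u2 w)
    (h3 : uncanceledAt E E.M Mopt i3 u3 w)
    (d12 : u1 ≠ u2) (d13 : u1 ≠ u3) (d23 : u2 ≠ u3) : False := by
  have t1 := ((uncanceledAt_iff E E.M Mopt i1 u1 w).mp h1).1
  have t2 := ((uncanceledAt_iff E E.M Mopt i2 u2 w).mp h2).1
  have t3 := ((uncanceledAt_iff E E.M Mopt i3 u3 w).mp h3).1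
  rcases Nat.lt_trichotomy i1 i2 with hab | hab | hab
  · rcases Nat.lt_trichotomy i2 i3 with hbc | hbc | hbc
    · exact three_incr E t1 t2 t3 hab hbc
    · subst hbc; exact two_high E t1 t2 t3 d23 hab
    · rcases Nat.lt_trichotomy i1 i3 with hac | hac | hac
      · exact three_incr E t1 t3 t2 hac hbc
      · subst hac; exact cancel_lemma E h1 h3 d13 h2 hab
      · exact three_incr E t3 t1 t2 hac hab
  · subst hab
    rcases Nat.lt_trichotomy i1 i3 with hbc | hbc | hbc
    · exact cancel_lemma E h1 h2 d12 h3 hbc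
    · subst hbc; exact same3 E t1.2.2.1 t2.2.2.1 t3.2.2.1 d12 d13 d23
    · exact two_high E t3 t1 t2 d12 hbc
  · rcases Nat.lt_trichotomy i1 i3 with hac | hac | hac
    · exact three_incr E t2 t1 t3 hab hac
    · subst hac; exact two_high E t2 t1 t3 d13 hab
    · rcases Nat.lt_trichotomy i2 i3 with hbc | hbc | hbc
      · exact three_incr E t2 t3 t1 hbc hac
      · subst hbc; exact cancel_lemma E h2 h3 d23 h1 hab
      · exact three_incr E t3 t2 t1 hbc hab

lemma endpoint_exists_uncanceled (E : GreedyExec V G) (h12 : E.Is12MinGreedy)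
    {Mopt : Set (Sym2 V)} (hMopt : IsMatchingSet G Mopt) {w : V}
    (hw : IsPathEndpoint E.M Mopt w) :
    ∃ v, IsUncanceledTransfer E E.M Mopt v w := by
  obtain ⟨i, v, ht⟩ := endpoint_exists_transfer E h12 hMopt hw
  by_cases hu : uncanceledAt E E.M Mopt i v w
  · exact ⟨v, i, hu⟩
  · rw [uncanceledAt_iff] at hu
    have hC : deg (E.Gs i) w = 1 ∧ (E.Gs i).Adj v w ∧
        ∃ (j₁ : ℕ) (_ : j₁ < i) (v₁ : V) (j₂ : ℕ) (_ : j₂ < i) (v₂ : V),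
          uncanceledAt E E.M Mopt j₁ v₁ w ∧ uncanceledAt E E.M Mopt j₂ v₂ w ∧
          (j₁, v₁) ≠ (j₂, v₂) := by
      by_contra hC
      exact hu ⟨ht, hC⟩
    obtain ⟨-, -, j1, -, v1, j2, -, v2, hu1, -, -⟩ := hC
    exact ⟨v1, j1, hu1⟩

lemma canceled_gives_two (E : GreedyExec V G) {Mopt : Set (Sym2 V)} {v w : V}
    (hc : IsCanceledTransfer E E.M Mopt v w) :
    ∃ v1 v2, v1 ≠ v2 ∧ IsUncanceledTransfer E E.M Mopt v1 w ∧
      IsUncanceledTransfer E E.M Mopt v2 w := by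
  obtain ⟨⟨i, ht⟩, hnu⟩ := hc
  have hni : ¬ uncanceledAt E E.M Mopt i v w := fun h => hnu ⟨i, h⟩
  rw [uncanceledAt_iff] at hni
  have hC : deg (E.Gs i) w = 1 ∧ (E.Gs i).Adj v w ∧
      ∃ (j₁ : ℕ) (_ : j₁ < i) (v₁ : V) (j₂ : ℕ) (_ : j₂ < i) (v₂ : V),
        uncanceledAt E E.M Mopt j₁ v₁ w ∧ uncanceledAt E E.M Mopt j₂ v₂ w ∧
        (j₁, v₁) ≠ (j₂, v₂) := by
    by_contra hC
    exact hni ⟨ht, hC⟩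
  obtain ⟨-, -, j1, -, v1, j2, -, v2, hu1, hu2, hpne⟩ := hC
  have hvne : v1 ≠ v2 := by
    rintro rfl
    have e1 : j1 = j2 := transfer_step_unique E
      ((uncanceledAt_iff E E.M Mopt j1 v1 w).mp hu1).1
      ((uncanceledAt_iff E E.M Mopt j2 v1 w).mp hu2).1
    exact hpne (by rw [e1])
  exact ⟨v1, v2, hvne, ⟨j1, hu1⟩, ⟨j2, hu2⟩⟩

end Aux4

/-- (a) every endpoint is the target of at most two uncanceled transfers,
and of exactly two if some transfer targeting it is canceled; (b) every endpoint is the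
target of at least one uncanceled transfer, so every M-augmenting path is the target of
at least two uncanceled transfers at its two endpoints. -/
theorem uncanceled_credit_bounds {V : Type} [Fintype V] (G : SimpleGraph V)
    (E : GreedyExec V G) (h12 : E.Is12MinGreedy)
    (Mopt : Set (Sym2 V)) (hnf : NormalForm G E.M Mopt) :
    (∀ w : V, IsPathEndpoint E.M Mopt w →
      {v : V | IsUncanceledTransfer E E.M Mopt v w}.ncard ≤ 2 ∧
      ((∃ v : V, IsCanceledTransfer E E.M Mopt v w) →
        {v : V | IsUncanceledTransfer E E.M Mopt v w}.ncard = 2)) ∧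
    (∀ w : V, IsPathEndpoint E.M Mopt w →
      1 ≤ {v : V | IsUncanceledTransfer E E.M Mopt v w}.ncard) ∧
    (∀ (m : ℕ) (p : ℕ → V), IsAugPath E.M Mopt m p →
      2 ≤ {q : V × V | IsUncanceledTransfer E E.M Mopt q.1 q.2 ∧
            (q.2 = p 0 ∨ q.2 = p (2 * m + 1))}.ncard) := by
  have hMopt : IsMatchingSet G Mopt := hnf.1.1
  have key_le : ∀ w : V, {v : V | IsUncanceledTransfer E E.M Mopt v w}.ncard ≤ 2 := by
    intro w
    by_contra hgt
    push_neg at hgt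
    obtain ⟨a, b, c, ha, hb, hc, dab, dac, dbc⟩ :=
      (Set.two_lt_ncard_iff (Set.toFinite _)).mp hgt
    obtain ⟨ia, hua⟩ := ha
    obtain ⟨ib, hub⟩ := hb
    obtain ⟨ic, huc⟩ := hc
    exact not_three E hua hub huc dab dac dbc
  refine ⟨fun w hw => ⟨key_le w, ?_⟩, fun w hw => ?_, fun m p hp => ?_⟩
  · rintro ⟨v, hv⟩
    obtain ⟨v1, v2, hvne, hu1, hu2⟩ := canceled_gives_two E hv
    have h2 : 1 < {v : V | IsUncanceledTransfer E E.M Mopt v w}.ncard :=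
      (Set.one_lt_ncard_iff (Set.toFinite _)).mpr ⟨v1, v2, hu1, hu2, hvne⟩
    have h3 := key_le w
    omega
  · obtain ⟨v, hv⟩ := endpoint_exists_uncanceled E h12 hMopt hw
    exact (Set.ncard_pos (Set.toFinite _)).mpr ⟨v, hv⟩
  · have hne : p 0 ≠ p (2*m+1) := by
      intro hcon
      have := hp.1 0 (by omega) (2*m+1) (by omega) hcon
      omega
    obtain ⟨v1, hu1⟩ := endpoint_exists_uncanceled E h12 hMopt ⟨m, p, hp, Or.inl rfl⟩
    obtain ⟨v2, hu2⟩ := endpoint_exists_uncanceled E h12 hMopt ⟨m, p, hp, Or.inr rfl⟩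
    have hpairne : ((v1, p 0) : V × V) ≠ (v2, p (2*m+1)) :=
      fun hq => hne (congrArg Prod.snd hq)
    have h2 : 1 < {q : V × V | IsUncanceledTransfer E E.M Mopt q.1 q.2 ∧
        (q.2 = p 0 ∨ q.2 = p (2 * m + 1))}.ncard :=
      (Set.one_lt_ncard_iff (Set.toFinite _)).mpr
        ⟨(v1, p 0), (v2, p (2*m+1)), ⟨hu1, Or.inl rfl⟩, ⟨hu2, Or.inr rfl⟩, hpairne⟩
    omega

end

end MinGreedy
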